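/- Let K be a connected finite abstract simplicial complex with n simplices and distinguished vertex p, let c > 0 be an integer, and let K̂_c be the wedge of m = n^{c−1} disjoint copies of K obtained by identifying the copies of the basepoint p to a single vertex. Then K̂_c is collapsible if and only if K is collapsible. -/

import Mathlib

namespace MorseApprox

variable {α : Type*}

/-- A (finite abstract) simplicial complex: a collection of nonempty finite simplices
closed under taking nonempty subsets. -/
def IsComplex (K : Set (Finset α)) : Prop :=
  (∀ σ ∈ K, σ.Nonempty) ∧ ∀ σ ∈ K, ∀ τ : Finset α, τ ⊆ σ → τ.Nonempty → τ ∈ K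

def IsSubcomplex (L K : Set (Finset α)) : Prop :=
  L ⊆ K ∧ IsComplex L

def IsMaximalFace (K : Set (Finset α)) (τ : Finset α) : Prop :=
  τ ∈ K ∧ ∀ ρ ∈ K, τ ⊆ ρ → ρ = τ

/-- A free face: a non-maximal simplex contained in a unique maximal simplex. -/
def IsFreeFace (K : Set (Finset α)) (σ : Finset α) : Prop :=
  σ ∈ K ∧ ¬ IsMaximalFace K σ ∧ ∃! τ : Finset α, IsMaximalFace K τ ∧ σ ⊆ τ

/-- An elementary collapse removes a free face `σ` together with its unique maximal
coface `τ`, provided `dim τ = dim σ + 1`. -/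
def ElemCollapse (K K' : Set (Finset α)) : Prop :=
  ∃ σ τ : Finset α, IsFreeFace K σ ∧ IsMaximalFace K τ ∧ σ ⊆ τ ∧
    τ.card = σ.card + 1 ∧ K' = K \ {σ, τ}

/-- `K` collapses to `L` via a finite sequence of elementary collapses. -/
def Collapses (K L : Set (Finset α)) : Prop :=
  Relation.ReflTransGen ElemCollapse K L

/-- `K` is collapsible if it collapses to a single vertex. -/
def Collapsible (K : Set (Finset α)) : Prop :=
  ∃ p : α, Collapses K ({({p} : Finset α)} : Set (Finset α))

/-- `K` is connected: its 1-skeleton is connected as a graph. -/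
def ComplexConnected [DecidableEq α] (K : Set (Finset α)) : Prop :=
  ∀ x y : α, ({x} : Finset α) ∈ K → ({y} : Finset α) ∈ K →
    Relation.ReflTransGen (fun a b : α => ({a, b} : Finset α) ∈ K ∧ a ≠ b) x y

/-- `σ` is a facet of `τ`. -/
def IsFacet (σ τ : Finset α) : Prop :=
  σ ⊆ τ ∧ τ.card = σ.card + 1

/-- The step relation of the Hasse diagram of `K` modified by the matching `V`:
an edge `τ → σ'` for every facet `σ'` of `τ` with `(σ', τ) ∉ V`, and an
edge `σ → τ` for every `(σ, τ) ∈ V`. -/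
def VStep (K : Set (Finset α)) (V : Set (Finset α × Finset α)) :
    Finset α → Finset α → Prop := fun x y =>
  (x ∈ K ∧ y ∈ K ∧ IsFacet y x ∧ (y, x) ∉ V) ∨ (x, y) ∈ V

/-- A discrete gradient vector field (Morse matching) on `K`. -/
def IsDGVF (K : Set (Finset α)) (V : Set (Finset α × Finset α)) : Prop :=
  (∀ p ∈ V, p.1 ∈ K ∧ p.2 ∈ K ∧ IsFacet p.1 p.2) ∧
  (∀ p ∈ V, ∀ q ∈ V,
    (p.1 = q.1 ∨ p.1 = q.2 ∨ p.2 = q.1 ∨ p.2 = q.2) → p = q) ∧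
  (∀ σ : Finset α, ¬ Relation.TransGen (VStep K V) σ σ)

/-- A critical simplex of a gradient vector field. -/
def IsCritical (K : Set (Finset α)) (V : Set (Finset α × Finset α))
    (σ : Finset α) : Prop :=
  σ ∈ K ∧ ∀ p ∈ V, σ ≠ p.1 ∧ σ ≠ p.2

noncomputable def criticalCount (K : Set (Finset α))
    (V : Set (Finset α × Finset α)) : ℕ :=
  {σ : Finset α | IsCritical K V σ}.ncard

noncomputable def regularCount (V : Set (Finset α × Finset α)) : ℕ :=
  {σ : Finset α | ∃ p ∈ V, σ = p.1 ∨ σ = p.2}.ncard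

def twoSimplices (K : Set (Finset α)) : Set (Finset α) :=
  {σ | σ ∈ K ∧ σ.card = 3}

/-- `L` is an erasable subcomplex of `K`. -/
def ErasableSubcomplex (K L : Set (Finset α)) : Prop :=
  ∃ M : Set (Finset α), IsSubcomplex M K ∧ Collapses K M ∧
    K \ M ⊆ L ∧ twoSimplices K \ M = twoSimplices L

/-- A 2-complex is erasable if it collapses to a complex of dimension at most 1. -/
def Erasable (K : Set (Finset α)) : Prop :=
  ∃ L : Set (Finset α), Collapses K L ∧ ∀ σ ∈ L, σ.card ≤ 2

/-- A collapse of `K` onto `M` induced by the gradient `V`: `K ∖ M` is a union of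
pairs of `V`. -/
def InducedCollapse (K M : Set (Finset α)) (V : Set (Finset α × Finset α)) : Prop :=
  IsSubcomplex M K ∧
    ∀ ρ ∈ K \ M, ∃ p ∈ V, (ρ = p.1 ∨ ρ = p.2) ∧ p.1 ∈ K \ M ∧ p.2 ∈ K \ M

/-- `σ` is eventually free in `K`. -/
def EventuallyFree (K : Set (Finset α)) (σ : Finset α) : Prop :=
  ∃ L : Set (Finset α), Collapses K L ∧ IsFreeFace L σ

/-- `σ` is eventually free in `K` through the gradient `V`. -/
def EventuallyFreeThrough (K : Set (Finset α)) (V : Set (Finset α × Finset α))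
    (σ : Finset α) : Prop :=
  ∃ L : Set (Finset α), InducedCollapse K L V ∧ Collapses K L ∧ IsFreeFace L σ

/-- `L` is erasable in `K` through the gradient `V`. -/
def ErasableThrough (K L : Set (Finset α)) (V : Set (Finset α × Finset α)) : Prop :=
  ∃ M : Set (Finset α), InducedCollapse K M V ∧ Collapses K M ∧
    K \ M ⊆ L ∧ twoSimplices K \ M = twoSimplices L

/-- A discrete Morse function on `K`: monotone, and any two distinct simplices with
the same value form a facet pair (hence every level set is a singleton or such a pair). -/
def IsDiscreteMorse (K : Set (Finset α)) (f : Finset α → ℝ) : Prop :=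
  (∀ σ ∈ K, ∀ τ ∈ K, σ ⊆ τ → f σ ≤ f τ) ∧
  (∀ σ ∈ K, ∀ τ ∈ K, σ ≠ τ → f σ = f τ → IsFacet σ τ ∨ IsFacet τ σ)

/-- `er K`: the minimum number of 2-simplices whose removal makes `K` erasable. -/
noncomputable def er (K : Set (Finset α)) : ℕ :=
  sInf {n | ∃ C : Set (Finset α), C ⊆ twoSimplices K ∧ Erasable (K \ C) ∧ n = C.ncard}

/-- The maximum number of regular (matched) simplices over all gradient vector
fields on `K`. -/
noncomputable def optMaxMM (K : Set (Finset α)) : ℕ :=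
  sSup {n | ∃ V : Set (Finset α × Finset α), IsDGVF K V ∧ n = regularCount V}

/-- The wedge of `m` disjoint copies of the pointed complex `(K, p)`, obtained by
identifying the copies of the basepoint `p` to the single vertex `none`. -/
def wedge [DecidableEq α] (K : Set (Finset α)) (p : α) (m : ℕ) :
    Set (Finset (Option ({x : α // x ≠ p} × Fin m))) :=
  {ρ | ∃ i : Fin m, ∃ σ ∈ K, ρ = σ.image fun x =>
    if h : x = p then (none : Option ({x : α // x ≠ p} × Fin m))
    else some (⟨x, h⟩, i)}

section AuxCollapse
variable {α : Type*}

theorem collapses_subset {X Y : Set (Finset α)} (h : Collapses X Y) : Y ⊆ X := by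
  induction h with
  | refl => exact subset_rfl
  | tail _ h2 ih =>
    obtain ⟨σ, τ, _, _, _, _, rfl⟩ := h2
    exact Set.diff_subset.trans ih

theorem exists_maximal_face {X : Set (Finset α)} (hfin : X.Finite) {ρ : Finset α}
    (hρ : ρ ∈ X) : ∃ μ, IsMaximalFace X μ ∧ ρ ⊆ μ := by
  have hS : {μ ∈ X | ρ ⊆ μ}.Finite := hfin.subset (Set.sep_subset _ _)
  obtain ⟨μ, hμ, hmax⟩ := hS.exists_maximalFor Finset.card _ ⟨ρ, hρ, subset_rfl⟩
  refine ⟨μ, ⟨hμ.1, fun ν hν hμν => ?_⟩, hμ.2⟩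
  have hνS : ν ∈ {μ ∈ X | ρ ⊆ μ} := ⟨hν, hμ.2.trans hμν⟩
  exact (Finset.eq_of_subset_of_card_le hμν
    (hmax hνS (Finset.card_le_card hμν))).symm

theorem isComplex_elemCollapse {X Y : Set (Finset α)} (hfin : X.Finite)
    (hX : IsComplex X) (h : ElemCollapse X Y) : IsComplex Y := by
  obtain ⟨σ, τ, hfree, hmaxτ, hστ, hcard, rfl⟩ := h
  obtain ⟨hσX, hσnotmax, τ', hτ'P, huniq⟩ := hfree
  have hττ' : τ = τ' := huniq τ ⟨hmaxτ, hστ⟩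
  subst hττ'
  constructor
  · exact fun ρ hρ => hX.1 ρ hρ.1
  · rintro μ ⟨hμX, hμne⟩ ρ hρμ hρne
    refine ⟨hX.2 μ hμX ρ hρμ hρne, ?_⟩
    have hμσ : μ ≠ σ := fun h => (h ▸ hμne) (Set.mem_insert _ _)
    have hμτ : μ ≠ τ := fun h => (h ▸ hμne) (Set.mem_insert_of_mem _ rfl)
    intro hmem
    rcases hmem with h1 | h1
    · -- ρ = σ
      subst h1
      obtain ⟨μ', hμ'max, hμμ'⟩ := exists_maximal_face hfin hμX
      have heq : μ' = τ := huniq μ' ⟨hμ'max, hρμ.trans hμμ'⟩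
      rw [heq] at hμμ'
      have h1 : ρ.card ≤ μ.card := Finset.card_le_card hρμ
      have h2 : μ.card ≤ τ.card := Finset.card_le_card hμμ'
      by_cases h3 : μ.card ≤ ρ.card
      · exact hμσ (Finset.eq_of_subset_of_card_le hρμ h3).symm
      · exact hμτ (Finset.eq_of_subset_of_card_le hμμ' (by omega))
    · -- ρ = τ
      rcases h1 with rfl
      exact hμτ (hmaxτ.2 μ hμX hρμ)

theorem nonempty_elemCollapse {X Y : Set (Finset α)} (hX : IsComplex X)
    (h : ElemCollapse X Y) : Y.Nonempty := by
  obtain ⟨σ, τ, hfree, hmax, hστ, hcard, rfl⟩ := h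
  have hσne : σ.Nonempty := hX.1 σ hfree.1
  have h2 : 1 < τ.card := by have := Finset.card_pos.mpr hσne; omega
  obtain ⟨a, ha, b, hb, hab⟩ := Finset.one_lt_card.mp h2
  have haX : ({a} : Finset α) ∈ X :=
    hX.2 τ hmax.1 {a} (Finset.singleton_subset_iff.mpr ha) ⟨a, Finset.mem_singleton_self a⟩
  have hbX : ({b} : Finset α) ∈ X :=
    hX.2 τ hmax.1 {b} (Finset.singleton_subset_iff.mpr hb) ⟨b, Finset.mem_singleton_self b⟩
  have hcard1 : ∀ c : α, ({c} : Finset α) ≠ τ := by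
    intro c hc
    rw [← hc] at h2
    simp at h2
  by_cases hs : ({a} : Finset α) = σ
  · refine ⟨{b}, hbX, ?_⟩
    intro hmem
    rcases hmem with h1 | h1
    · rw [← hs] at h1; exact hab (Finset.singleton_injective h1).symm
    · exact hcard1 b h1
  · refine ⟨{a}, haX, ?_⟩
    intro hmem
    rcases hmem with h1 | h1
    · exact hs h1
    · exact hcard1 a h1

theorem collapses_pres {X Y : Set (Finset α)} (h : Collapses X Y) (hfin : X.Finite)
    (hX : IsComplex X) : Y.Finite ∧ IsComplex Y ∧ Y.Nonempty ∨ X = Y := by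
  induction h with
  | refl => exact Or.inr rfl
  | tail h1 h2 ih =>
    left
    rcases ih with ⟨hf, hc, _⟩ | rfl
    · refine ⟨hf.subset ?_, isComplex_elemCollapse hf hc h2, nonempty_elemCollapse hc h2⟩
      obtain ⟨_, _, _, _, _, _, rfl⟩ := h2
      exact Set.diff_subset
    · refine ⟨hfin.subset ?_, isComplex_elemCollapse hfin hX h2, nonempty_elemCollapse hX h2⟩
      obtain ⟨_, _, _, _, _, _, rfl⟩ := h2
      exact Set.diff_subset

theorem collapses_nonempty {X Y : Set (Finset α)} (h : Collapses X Y) (hfin : X.Finite)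
    (hX : IsComplex X) (hne : X.Nonempty) : Y.Nonempty := by
  rcases collapses_pres h hfin hX with ⟨_, _, h⟩ | rfl <;> assumption

end AuxCollapse
section AuxGlue
variable {α : Type*}

theorem ne_of_card_succ {σ τ : Finset α} (h : τ.card = σ.card + 1) : τ ≠ σ := by
  intro he; rw [he] at h; omega

theorem glue {L L' A : Set (Finset α)} (h : Collapses L L')
    (hA : ∀ σ ∈ L, σ ∉ L' → ∀ a ∈ A, ¬ σ ⊆ a) :
    Collapses (L ∪ A) (L' ∪ A) := by
  induction h using Relation.ReflTransGen.head_induction_on with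
  | refl => exact Relation.ReflTransGen.refl
  | head h1 h2 ih =>
    rename_i a c
    obtain ⟨σ, τ, hfree, hmax, hστ, hcard, rfl⟩ := h1
    have hσL' : σ ∉ L' := fun h => ((collapses_subset h2) h).2 (Set.mem_insert _ _)
    have hσA : ∀ a' ∈ A, ¬ σ ⊆ a' := hA σ hfree.1 hσL'
    have hσnA : σ ∉ A := fun h => hσA σ h subset_rfl
    have hτnA : τ ∉ A := fun h => hσA τ h hστ
    have hτσ : τ ≠ σ := ne_of_card_succ hcard
    have hmax' : IsMaximalFace (a ∪ A) τ := by
      refine ⟨Or.inl hmax.1, fun ρ hρ hτρ => ?_⟩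
      rcases hρ with hρ | hρ
      · exact hmax.2 ρ hρ hτρ
      · exact absurd (hστ.trans hτρ) (hσA ρ hρ)
    have hstep : ElemCollapse (a ∪ A) ((a \ {σ, τ}) ∪ A) := by
      refine ⟨σ, τ, ⟨Or.inl hfree.1, ?_, τ, ⟨hmax', hστ⟩, ?_⟩, hmax', hστ, hcard, ?_⟩
      · rintro ⟨_, hall⟩
        exact hτσ (hall τ (Or.inl hmax.1) hστ)
      · rintro ρ ⟨hρmax, hσρ⟩
        rcases hρmax.1 with hρ | hρ
        · have hρmaxa : IsMaximalFace a ρ :=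
            ⟨hρ, fun ν hν hρν => hρmax.2 ν (Or.inl hν) hρν⟩
          obtain ⟨_, _, τ', hτ'P, huniq⟩ := hfree
          exact (huniq ρ ⟨hρmaxa, hσρ⟩).trans (huniq τ ⟨hmax, hστ⟩).symm
        · exact absurd hσρ (hσA ρ hρ)
      · ext x
        simp only [Set.mem_diff, Set.mem_union, Set.mem_insert_iff, Set.mem_singleton_iff]
        constructor
        · rintro (⟨hx, hne⟩ | hx)
          · exact ⟨Or.inl hx, hne⟩
          · refine ⟨Or.inr hx, ?_⟩
            rintro (rfl | rfl)
            · exact hσnA hx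
            · exact hτnA hx
        · rintro ⟨hx | hx, hne⟩
          · exact Or.inl ⟨hx, hne⟩
          · exact Or.inr hx
    refine Relation.ReflTransGen.head hstep (ih ?_)
    intro σ' hσ' hσ'L'
    exact hA σ' (hσ'.1) hσ'L'

theorem map_collapses {β : Type*} [DecidableEq α] [DecidableEq β] {f : α → β}
    (hf : Function.Injective f) {X Y : Set (Finset α)} (h : Collapses X Y) :
    Collapses ((fun s => Finset.image f s) '' X) ((fun s => Finset.image f s) '' Y) := by
  induction h with
  | refl => exact Relation.ReflTransGen.refl
  | tail h1 h2 ih =>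
    rename_i b c
    refine Relation.ReflTransGen.tail ih ?_
    obtain ⟨σ, τ, hfree, hmax, hστ, hcard, rfl⟩ := h2
    have hcards : ∀ s : Finset α, (s.image f).card = s.card :=
      fun s => Finset.card_image_of_injective s hf
    have hsub : ∀ s t : Finset α, s.image f ⊆ t.image f ↔ s ⊆ t :=
      fun s t => Finset.image_subset_image_iff hf
    have hinj : Function.Injective (fun s : Finset α => Finset.image f s) :=
      Finset.image_injective hf
    have hmax' : IsMaximalFace ((fun s => Finset.image f s) '' b) (τ.image f) := by
      refine ⟨⟨τ, hmax.1, rfl⟩, ?_⟩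
      rintro ρ ⟨ρ', hρ', rfl⟩ hsub'
      rw [hsub] at hsub'
      rw [hmax.2 ρ' hρ' hsub']
    refine ⟨σ.image f, τ.image f, ⟨⟨σ, hfree.1, rfl⟩, ?_, τ.image f, ⟨hmax', (hsub _ _).mpr hστ⟩, ?_⟩,
      hmax', (hsub _ _).mpr hστ, by rw [hcards, hcards, hcard], ?_⟩
    · rintro ⟨_, hall⟩
      have := hall (τ.image f) ⟨τ, hmax.1, rfl⟩ ((hsub _ _).mpr hστ)
      exact ne_of_card_succ hcard (hinj this)
    · rintro ρ ⟨⟨⟨ρ', hρ', rfl⟩, hρmax⟩, hσρ⟩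
      have hρ'max : IsMaximalFace b ρ' := by
        refine ⟨hρ', fun ν hν hρν => ?_⟩
        exact hinj (hρmax (ν.image f) ⟨ν, hν, rfl⟩ ((hsub _ _).mpr hρν))
      obtain ⟨_, _, τ', hτ'P, huniq⟩ := hfree
      rw [hsub] at hσρ
      rw [(huniq ρ' ⟨hρ'max, hσρ⟩).trans (huniq τ ⟨hmax, hστ⟩).symm]
    · rw [Set.image_diff hinj]
      congr 1
      rw [Set.image_pair]

end AuxGlue
section AuxVertex
variable {α : Type*} [DecidableEq α]

theorem collapses_to_vertex : ∀ n (K : Set (Finset α)), K.ncard = n → K.Finite → IsComplex K →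
    ∀ q v : α, Collapses K {({q} : Finset α)} → ({v} : Finset α) ∈ K →
    Collapses K {({v} : Finset α)} := by
  intro n
  induction n using Nat.strong_induction_on with
  | _ n ih =>
    intro K hn hfin hK q v hcol hv
    rcases Relation.ReflTransGen.cases_head hcol with heq | ⟨b, h1, h2⟩
    · have : ({v} : Finset α) = {q} := by rw [heq] at hv; exact hv
      rw [heq, this]
      exact Relation.ReflTransGen.refl
    · obtain ⟨σ, τ, hfree, hmax, hστ, hcard, rfl⟩ := h1
      have h1' : ElemCollapse K (K \ {σ, τ}) := ⟨σ, τ, hfree, hmax, hστ, hcard, rfl⟩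
      have hbK : K \ {σ, τ} ⊆ K := Set.diff_subset
      have hbfin : (K \ {σ, τ}).Finite := hfin.subset hbK
      have hKb : IsComplex (K \ {σ, τ}) := isComplex_elemCollapse hfin hK h1'
      have hlt : (K \ {σ, τ}).ncard < n := by
        rw [← hn]
        exact Set.ncard_lt_ncard ⟨hbK, fun hs =>
          ((hs hfree.1).2 (Set.mem_insert _ _))⟩ hfin
      by_cases hvb : ({v} : Finset α) ∈ K \ {σ, τ}
      · exact Relation.ReflTransGen.head h1'
          (ih _ hlt _ rfl hbfin hKb q v h2 hvb)
      · -- {v} was removed, so σ = {v}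
        have hvmem : ({v} : Finset α) ∈ ({σ, τ} : Set (Finset α)) := by
          by_contra hc; exact hvb ⟨hv, hc⟩
        have hσne : σ.Nonempty := hK.1 σ hfree.1
        have hcτ : 1 < τ.card := by have := Finset.card_pos.mpr hσne; omega
        have hσv : σ = {v} := by
          rcases hvmem with h | h
          · exact h.symm
          · exfalso; rw [← h, Finset.card_singleton] at hcτ; omega
        subst hσv
        have hcτ2 : τ.card = 2 := by rw [hcard, Finset.card_singleton]
        have hvτ : v ∈ τ := hστ (Finset.mem_singleton_self v)
        obtain ⟨x, y, hxy, hτxy⟩ := Finset.card_eq_two.mp hcτ2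
        -- get w with τ = {v, w}, v ≠ w
        obtain ⟨w, hvw, hτw⟩ : ∃ w, v ≠ w ∧ τ = {v, w} := by
          rw [hτxy] at hvτ
          rcases Finset.mem_insert.mp hvτ with rfl | h
          · exact ⟨y, hxy, hτxy⟩
          · rw [Finset.mem_singleton] at h
            subst h
            exact ⟨x, fun he => hxy he.symm, by rw [hτxy, Finset.pair_comm]⟩
        obtain ⟨_, _, τ', hτ'P, huniq⟩ := hfree
        have huniqτ : ∀ μ, IsMaximalFace K μ → ({v} : Finset α) ⊆ μ → μ = τ :=
          fun μ hμ hs => (huniq μ ⟨hμ, hs⟩).trans (huniq τ ⟨hmax, hστ⟩).symm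
        have hcof : ∀ ρ ∈ K, v ∈ ρ → ρ = {v} ∨ ρ = τ := by
          intro ρ hρ hvρ
          obtain ⟨μ, hμmax, hρμ⟩ := exists_maximal_face hfin hρ
          have hμτ : μ = τ := huniqτ μ hμmax
            ((Finset.singleton_subset_iff.mpr hvρ).trans hρμ)
          rw [hμτ] at hρμ
          rw [hτw] at hρμ
          by_cases hwρ : w ∈ ρ
          · right
            rw [hτw]
            refine Finset.Subset.antisymm hρμ ?_
            intro z hz
            rcases Finset.mem_insert.mp hz with rfl | hz
            · exact hvρ
            · rw [Finset.mem_singleton] at hz; subst hz; exact hwρ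
          · left
            apply Finset.Subset.antisymm _ (Finset.singleton_subset_iff.mpr hvρ)
            intro z hz
            rcases Finset.mem_insert.mp (hρμ hz) with rfl | hz'
            · exact Finset.mem_singleton_self _
            · rw [Finset.mem_singleton] at hz'; subst hz'; exact absurd hz hwρ
        have hwK : ({w} : Finset α) ∈ K := hK.2 τ hmax.1 {w}
          (Finset.singleton_subset_iff.mpr (by rw [hτw]; simp))
          ⟨w, Finset.mem_singleton_self w⟩
        have hwτ : ({w} : Finset α) ≠ τ := by
          intro h; rw [← h, Finset.card_singleton] at hcτ2; omega
        have hwv : ({w} : Finset α) ≠ {v} := fun h => hvw (Finset.singleton_injective h).symm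
        have hwb : ({w} : Finset α) ∈ K \ {{v}, τ} := by
          refine ⟨hwK, ?_⟩
          rintro (h | h)
          · exact hwv h
          · exact hwτ h
        have ihw : Collapses (K \ {{v}, τ}) {({w} : Finset α)} :=
          ih _ hlt _ rfl hbfin hKb q w h2 hwb
        -- glue back {v} and τ
        have hglue := glue (A := {({v} : Finset α), τ}) ihw ?_
        · have hKeq : (K \ {{v}, τ}) ∪ {{v}, τ} = K := by
            apply Set.diff_union_of_subset
            intro z hz
            rcases hz with rfl | hz
            · exact hv
            · rw [Set.mem_singleton_iff] at hz; subst hz; exact hmax.1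
          rw [hKeq] at hglue
          have hlast : ElemCollapse ({({w} : Finset α)} ∪ {{v}, τ}) {({v} : Finset α)} := by
            have hwmem : ({w} : Finset α) ∈ ({({w} : Finset α)} ∪ {{v}, τ} : Set (Finset α)) :=
              Or.inl rfl
            have hτmem : τ ∈ ({({w} : Finset α)} ∪ {{v}, τ} : Set (Finset α)) :=
              Or.inr (Or.inr rfl)
            have hwsubτ : ({w} : Finset α) ⊆ τ :=
              Finset.singleton_subset_iff.mpr (by rw [hτw]; simp)
            have hmaxτS : IsMaximalFace ({({w} : Finset α)} ∪ {{v}, τ}) τ := by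
              refine ⟨hτmem, ?_⟩
              rintro ρ (rfl | (rfl | rfl)) hτρ
              · exact absurd (Finset.card_le_card hτρ) (by simp [hcτ2])
              · exact absurd (Finset.card_le_card hτρ) (by simp [hcτ2])
              · rfl
            refine ⟨{w}, τ, ⟨hwmem, ?_, τ, ⟨hmaxτS, hwsubτ⟩, ?_⟩, hmaxτS, hwsubτ,
              by rw [hcτ2, Finset.card_singleton], ?_⟩
            · rintro ⟨_, hall⟩
              exact hwτ (hall τ hτmem hwsubτ).symm
            · rintro ρ ⟨hρmax, hwρ⟩
              rcases hρmax.1 with rfl | (rfl | rfl)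
              · exact absurd (hρmax.2 τ hτmem hwsubτ) hwτ.symm
              · refine absurd (Finset.singleton_subset_iff.mp hwρ) ?_
                simp only [Finset.mem_singleton]
                exact fun h => hvw h.symm
              · rfl
            · ext ρ
              simp only [Set.mem_diff, Set.mem_union, Set.mem_insert_iff,
                Set.mem_singleton_iff]
              constructor
              · rintro rfl
                refine ⟨Or.inr (Or.inl rfl), ?_⟩
                rintro (h | h)
                · exact hwv.symm h
                · rw [← h] at hcτ2
                  simp at hcτ2
              · rintro ⟨(rfl | (rfl | rfl)), hne⟩
                · exact absurd (Or.inl rfl) hne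
                · rfl
                · exact absurd (Or.inr rfl) hne
          exact Relation.ReflTransGen.tail hglue hlast
        · -- glue side condition
          intro σ' hσ' hσ'ne a ha hsub
          have hσ'K : σ' ∈ K := hσ'.1
          have hσ'nonempty : σ'.Nonempty := hK.1 σ' hσ'K
          rcases ha with rfl | ha
          · -- a = {v}
            have : σ' = {v} := Finset.Nonempty.subset_singleton_iff hσ'nonempty |>.mp hsub
            exact hσ'.2 (Or.inl this)
          · rw [Set.mem_singleton_iff] at ha; subst ha
            -- σ' ⊆ τ = {v,w}
            by_cases hvσ' : v ∈ σ'
            · rcases hcof σ' hσ'K hvσ' with h | h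
              · exact hσ'.2 (Or.inl h)
              · exact hσ'.2 (Or.inr h)
            · have : σ' ⊆ {w} := by
                intro z hz
                rw [hτw] at hsub
                rcases Finset.mem_insert.mp (hsub hz) with rfl | hz'
                · exact absurd hz hvσ'
                · exact hz'
              have : σ' = {w} := Finset.Nonempty.subset_singleton_iff hσ'nonempty |>.mp this
              exact hσ'ne this
end AuxVertex
section AuxWedge
variable {α : Type*} [DecidableEq α]

/-- vertex map of the `i`-th copy. -/
def wf (p : α) (m : ℕ) (i : Fin m) (x : α) : Option ({x : α // x ≠ p} × Fin m) :=
  if h : x = p then none else some (⟨x, h⟩, i)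

theorem wf_inj (p : α) (m : ℕ) (i : Fin m) : Function.Injective (wf p m i) := by
  intro x y h
  unfold wf at h
  by_cases hx : x = p <;> by_cases hy : y = p
  · rw [hx, hy]
  · rw [dif_pos hx, dif_neg hy] at h; exact nomatch h
  · rw [dif_neg hx, dif_pos hy] at h; exact nomatch h
  · rw [dif_neg hx, dif_neg hy] at h
    exact congrArg Subtype.val (congrArg Prod.fst (Option.some_injective _ h))

theorem wf_eq_none {p : α} {m : ℕ} {i : Fin m} {x : α} : wf p m i x = none ↔ x = p := by
  unfold wf; split_ifs with h <;> simp [h]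

theorem wf_elem {p : α} {m : ℕ} {i : Fin m} {x : α} :
    wf p m i x = none ∨ ∃ y : {x : α // x ≠ p}, wf p m i x = some (y, i) := by
  unfold wf; split_ifs with h
  · exact Or.inl rfl
  · exact Or.inr ⟨⟨x, h⟩, rfl⟩

theorem img_elem {p : α} {m : ℕ} {i : Fin m} {σ : Finset α}
    {z : Option ({x : α // x ≠ p} × Fin m)} (hz : z ∈ σ.image (wf p m i)) :
    z = none ∨ ∃ y : {x : α // x ≠ p}, z = some (y, i) := by
  obtain ⟨x, _, rfl⟩ := Finset.mem_image.mp hz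
  exact wf_elem

theorem wedge_eq (K : Set (Finset α)) (p : α) (m : ℕ) :
    wedge K p m = {ρ | ∃ i : Fin m, ∃ σ ∈ K, ρ = σ.image (wf p m i)} := rfl

theorem wedge_nonempty_mem {K : Set (Finset α)} (hK : IsComplex K) {p : α} {m : ℕ}
    {ρ : Finset (Option ({x : α // x ≠ p} × Fin m))} (hρ : ρ ∈ wedge K p m) :
    ρ.Nonempty := by
  obtain ⟨i, σ, hσ, rfl⟩ := hρ
  exact (hK.1 σ hσ).image _

theorem img_p {p : α} {m : ℕ} (i : Fin m) :
    ({p} : Finset α).image (wf p m i) = {none} := by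
  rw [Finset.image_singleton, wf_eq_none.mpr rfl]

theorem img_ne_none {p : α} {m : ℕ} {i : Fin m} {σ : Finset α} (hne : σ.Nonempty)
    (h : σ.image (wf p m i) ≠ {none}) :
    ∃ y : {x : α // x ≠ p}, some (y, i) ∈ σ.image (wf p m i) := by
  by_contra hc
  push_neg at hc
  apply h
  apply Finset.Nonempty.subset_singleton_iff (hne.image _) |>.mp
  intro z hz
  rcases img_elem hz with rfl | ⟨y, rfl⟩
  · exact Finset.mem_singleton_self _
  · exact absurd hz (hc y)

/-- restriction of a subfamily of the wedge to the `i`-th copy -/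
def wres (p : α) (m : ℕ) (i : Fin m)
    (X : Set (Finset (Option ({x : α // x ≠ p} × Fin m)))) : Set (Finset α) :=
  {σ | σ.image (wf p m i) ∈ X}

theorem wres_wedge {K : Set (Finset α)} (hK : IsComplex K) (p : α) (m : ℕ) (i : Fin m) :
    wres p m i (wedge K p m) = K := by
  ext σ
  constructor
  · rintro ⟨j, μ, hμ, heq⟩
    replace heq : σ.image (wf p m i) = μ.image (wf p m j) := heq
    by_cases hij : j = i
    · subst hij
      rwa [← Finset.image_injective (wf_inj p m j) heq.symm]
    · -- cross copies: σ = {p}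
      have hsub : ∀ z ∈ σ.image (wf p m i), z = none := by
        intro z hz
        rcases img_elem hz with rfl | ⟨y, rfl⟩
        · rfl
        · rw [heq] at hz
          rcases img_elem hz with h | ⟨y', h⟩
          · exact absurd h (by simp)
          · simp only [Option.some_inj, Prod.mk.injEq] at h
            exact absurd h.2.symm hij
      have hσp : σ ⊆ {p} := by
        intro x hx
        have := hsub _ (Finset.mem_image_of_mem _ hx)
        rw [Finset.mem_singleton, ← wf_eq_none (i := i)]
        exact this
      have hσne : σ.Nonempty := by
        rcases Finset.eq_empty_or_nonempty σ with rfl | h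
        · exfalso
          have hμne : μ.Nonempty := hK.1 μ hμ
          have := heq ▸ (hμne.image (wf p m j))
          simp at this
        · exact h
      have hμp : μ ⊆ {p} := by
        intro x hx
        have hz : wf p m j x ∈ μ.image (wf p m j) := Finset.mem_image_of_mem _ hx
        rw [← heq] at hz
        have := hsub _ hz
        rw [Finset.mem_singleton, ← wf_eq_none (i := j)]
        exact this
      have hμne : μ.Nonempty := hK.1 μ hμ
      have hμeq : μ = {p} := (Finset.Nonempty.subset_singleton_iff hμne).mp hμp
      rw [(Finset.Nonempty.subset_singleton_iff hσne).mp hσp, ← hμeq]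
      exact hμ
  · intro hσ
    exact ⟨i, σ, hσ, rfl⟩

theorem wres_none {p : α} {m : ℕ} (i : Fin m) :
    wres p m i {({none} : Finset (Option ({x : α // x ≠ p} × Fin m)))} =
      {({p} : Finset α)} := by
  ext σ
  simp only [wres, Set.mem_singleton_iff, Set.mem_setOf_eq]
  constructor
  · intro h
    rw [← img_p i] at h
    exact Finset.image_injective (wf_inj p m i) h
  · rintro rfl
    exact img_p i

end AuxWedge
section AuxRestrict
variable {α : Type*} [DecidableEq α] {K : Set (Finset α)} {p : α} {m : ℕ}

/-- restricting one elementary collapse whose top face lies in copy `i`. -/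
theorem etrans (hK : IsComplex K) {i : Fin m}
    {X : Set (Finset (Option ({x : α // x ≠ p} × Fin m)))} (hXW : X ⊆ wedge K p m)
    {σ τ : Finset (Option ({x : α // x ≠ p} × Fin m))}
    (hfree : IsFreeFace X σ) (hmax : IsMaximalFace X τ) (hστ : σ ⊆ τ)
    (hcard : τ.card = σ.card + 1) {τb : Finset α} (hτ : τ = τb.image (wf p m i)) :
    ElemCollapse (wres p m i X) (wres p m i (X \ {σ, τ})) := by
  have hinj := Finset.image_injective (wf_inj p m i)
  have hsubiff : ∀ s t : Finset α, s.image (wf p m i) ⊆ t.image (wf p m i) ↔ s ⊆ t :=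
    fun s t => Finset.image_subset_image_iff (wf_inj p m i)
  -- lift σ
  obtain ⟨σb, hσbτb, hσb⟩ : ∃ σb : Finset α, σb ⊆ τb ∧ σb.image (wf p m i) = σ := by
    rw [hτ] at hστ; exact Finset.subset_image_iff.mp hστ
  have hσX : σ ∈ X := hfree.1
  have hτX : τ ∈ X := hmax.1
  have hσbX : σb ∈ wres p m i X := by simp only [wres, Set.mem_setOf_eq]; rw [hσb]; exact hσX
  have hτbX : τb ∈ wres p m i X := by simp only [wres, Set.mem_setOf_eq]; rw [← hτ]; exact hτX
  have hcards : ∀ s : Finset α, (s.image (wf p m i)).card = s.card :=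
    fun s => Finset.card_image_of_injective s (wf_inj p m i)
  have hcardb : τb.card = σb.card + 1 := by
    rw [← hcards τb, ← hcards σb, hσb, ← hτ, hcard]
  have hτbne : τb ≠ σb := ne_of_card_succ hcardb
  -- maximality in wres
  have hmaxτb : IsMaximalFace (wres p m i X) τb := by
    refine ⟨hτbX, fun ρ hρ hsub => ?_⟩
    apply hinj
    rw [← hτ]
    exact hmax.2 _ hρ (by rw [hτ]; exact (hsubiff _ _).mpr hsub)
  -- lifting maximal faces of wres to maximal faces of X
  have hliftmax : ∀ ρb : Finset α, ρb ∈ wres p m i X → ρb ≠ {p} →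
      IsMaximalFace (wres p m i X) ρb → IsMaximalFace X (ρb.image (wf p m i)) := by
    intro ρb hρb hρbp hρbmax
    refine ⟨hρb, fun μ hμ hsub => ?_⟩
    -- ρb has an element ≠ p, hence its image has a `some` of index i
    have hρbne : ρb.Nonempty := by
      rcases Finset.eq_empty_or_nonempty ρb with rfl | h
      · exfalso
        have := wedge_nonempty_mem hK (hXW hρb)
        simp at this
      · exact h
    have himg : ρb.image (wf p m i) ≠ {none} := by
      intro h
      apply hρbp
      apply hinj
      rw [h, img_p]
    obtain ⟨y, hy⟩ := img_ne_none hρbne himg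
    -- μ lies in copy i
    obtain ⟨j, μb, hμbK, hμeq⟩ := hXW hμ
    replace hμeq : μ = μb.image (wf p m j) := hμeq
    have hij : j = i := by
      have hyμ : some (y, i) ∈ μ := hsub hy
      rw [hμeq] at hyμ
      rcases img_elem hyμ with h | ⟨y', h⟩
      · exact absurd h (by simp)
      · simp only [Option.some_inj, Prod.mk.injEq] at h
        exact h.2.symm
    subst hij
    rw [hμeq] at hsub ⊢
    rw [hsubiff] at hsub
    rw [hρbmax.2 μb (by simp only [wres, Set.mem_setOf_eq]; rw [← hμeq]; exact hμ) hsub]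
  refine ⟨σb, τb, ⟨hσbX, ?_, τb, ⟨hmaxτb, hσbτb⟩, ?_⟩, hmaxτb, hσbτb, hcardb, ?_⟩
  · rintro ⟨_, hall⟩
    exact hτbne (hall τb hτbX hσbτb)
  · rintro ρb ⟨hρbmax, hσρb⟩
    by_cases hρbp : ρb = {p}
    · -- then σb ⊆ {p}, so σb = {p} = ρb, contradicting maximality via τb
      subst hρbp
      have hσbne : σb.Nonempty := by
        rcases Finset.eq_empty_or_nonempty σb with rfl | h
        · exfalso
          have := wedge_nonempty_mem hK (hXW hσX)
          rw [← hσb] at this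
          simp at this
        · exact h
      have hσbeq : σb = {p} := (Finset.Nonempty.subset_singleton_iff hσbne).mp hσρb
      exfalso
      have := hρbmax.2 τb hτbX (hσbeq ▸ hσbτb)
      exact hτbne (by rw [this, hσbeq])
    · have hXmax := hliftmax ρb hρbmax.1 hρbp hρbmax
      obtain ⟨_, _, τ', hτ'P, huniq⟩ := hfree
      have h1 : ρb.image (wf p m i) = τ' := huniq _ ⟨hXmax, by rw [← hσb, hsubiff]; exact hσρb⟩
      have h2 : τ = τ' := huniq τ ⟨hmax, hστ⟩
      apply hinj
      rw [h1, ← h2, hτ]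
  · ext ρb
    simp only [wres, Set.mem_diff, Set.mem_setOf_eq, Set.mem_insert_iff,
      Set.mem_singleton_iff]
    constructor
    · rintro ⟨h1, h2⟩
      refine ⟨h1, ?_⟩
      rintro (rfl | rfl)
      · exact h2 (Or.inl hσb)
      · exact h2 (Or.inr hτ.symm)
    · rintro ⟨h1, h2⟩
      refine ⟨h1, ?_⟩
      rintro (h | h)
      · exact h2 (Or.inl (hinj (h.trans hσb.symm)))
      · exact h2 (Or.inr (hinj (h.trans (hτ ▸ rfl)).symm).symm)

/-- steps entirely in another copy are invisible for `wres i`. -/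
theorem invis (hK : IsComplex K) {i j : Fin m} (hij : j ≠ i)
    {X : Set (Finset (Option ({x : α // x ≠ p} × Fin m)))} (hXW : X ⊆ wedge K p m)
    {σ τ : Finset (Option ({x : α // x ≠ p} × Fin m))}
    (hσX : σ ∈ X) (hστ : σ ⊆ τ) (hσnone : σ ≠ {none}) (_hcard2 : 1 < τ.card)
    {τb : Finset α} (hτ : τ = τb.image (wf p m j)) :
    wres p m i (X \ {σ, τ}) = wres p m i X := by
  have hσne : σ.Nonempty := wedge_nonempty_mem hK (hXW hσX)
  obtain ⟨z, hzσ, hznone⟩ : ∃ z ∈ σ, z ≠ none := by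
    by_contra hc
    push_neg at hc
    apply hσnone
    exact (Finset.Nonempty.subset_singleton_iff hσne).mp
      (fun z hz => Finset.mem_singleton.mpr (hc z hz))
  obtain ⟨y, rfl⟩ : ∃ y : {x : α // x ≠ p} × Fin m, z = some y := by
    cases z with
    | none => exact absurd rfl hznone
    | some y => exact ⟨y, rfl⟩
  have hyj : y.2 = j := by
    have := hστ hzσ
    rw [hτ] at this
    rcases img_elem this with h | ⟨y', h⟩
    · exact absurd h (by simp)
    · simp only [Option.some_inj] at h
      rw [h]
  ext ρb
  simp only [wres, Set.mem_diff, Set.mem_setOf_eq, Set.mem_insert_iff,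
    Set.mem_singleton_iff]
  have hρσ : ρb.image (wf p m i) ≠ σ := by
    intro h
    have : some y ∈ ρb.image (wf p m i) := h ▸ hzσ
    rcases img_elem this with h' | ⟨y', h'⟩
    · exact absurd h' (by simp)
    · simp only [Option.some_inj] at h'
      apply hij
      rw [← hyj, h']
  have hρτ : ρb.image (wf p m i) ≠ τ := by
    intro h
    have : some y ∈ ρb.image (wf p m i) := h ▸ (hστ hzσ)
    rcases img_elem this with h' | ⟨y', h'⟩
    · exact absurd h' (by simp)
    · simp only [Option.some_inj] at h'
      apply hij
      rw [← hyj, h']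
  constructor
  · rintro ⟨h1, _⟩; exact h1
  · intro h1
    refine ⟨h1, ?_⟩
    rintro (h | h)
    · exact hρσ h
    · exact hρτ h

theorem restrict_collapses (hK : IsComplex K)
    {X Y : Set (Finset (Option ({x : α // x ≠ p} × Fin m)))} (h : Collapses X Y)
    (i : Fin m) :
    X ⊆ wedge K p m →
    (({none} : Finset (Option ({x : α // x ≠ p} × Fin m))) ∈ X →
      ({none} : Finset (Option ({x : α // x ≠ p} × Fin m))) ∈ Y) →
    Collapses (wres p m i X) (wres p m i Y) := by
  induction h using Relation.ReflTransGen.head_induction_on with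
  | refl => exact fun _ _ => Relation.ReflTransGen.refl
  | head h1 h2 ih =>
    rename_i a c
    intro hXW hnone
    obtain ⟨σ, τ, hfree, hmax, hστ, hcard, rfl⟩ := h1
    have hcW : a \ {σ, τ} ⊆ wedge K p m := Set.diff_subset.trans hXW
    have hnc : ({none} : Finset (Option ({x : α // x ≠ p} × Fin m))) ∈ a \ {σ, τ} →
        ({none} : Finset (Option ({x : α // x ≠ p} × Fin m))) ∈ Y :=
      fun h => hnone h.1
    have hσnone : σ ≠ {none} := by
      intro h
      subst h
      by_cases hna : ({none} : Finset (Option ({x : α // x ≠ p} × Fin m))) ∈ a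
      · have := collapses_subset h2 (hnone hna)
        exact this.2 (Or.inl rfl)
      · exact hna hfree.1
    have hσne : σ.Nonempty := wedge_nonempty_mem hK (hXW hfree.1)
    have hcard2 : 1 < τ.card := by have := Finset.card_pos.mpr hσne; omega
    obtain ⟨j, τb, hτbK, hτeq⟩ := hXW hmax.1
    replace hτeq : τ = τb.image (wf p m j) := hτeq
    by_cases hij : j = i
    · subst hij
      exact Relation.ReflTransGen.head
        (etrans hK hXW hfree hmax hστ hcard hτeq) (ih hcW hnc)
    · rw [← invis hK hij hXW hfree.1 hστ hσnone hcard2 hτeq] at *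
      exact ih hcW hnc

theorem split_removal {γ : Type*} {X Y : Set (Finset γ)} (h : Collapses X Y)
    {ρ0 : Finset γ} (hX : ρ0 ∈ X) (hY : ρ0 ∉ Y) :
    ∃ X1 X2, Collapses X X1 ∧ ρ0 ∈ X1 ∧ ElemCollapse X1 X2 ∧ ρ0 ∉ X2 ∧ Collapses X2 Y := by
  induction h using Relation.ReflTransGen.head_induction_on with
  | refl => exact absurd hX hY
  | head h1 h2 ih =>
    rename_i a c
    by_cases hρc : ρ0 ∈ c
    · obtain ⟨X1, X2, hc1, hm1, hel, hm2, hc2⟩ := ih hρc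
      exact ⟨X1, X2, Relation.ReflTransGen.head h1 hc1, hm1, hel, hm2, hc2⟩
    · exact ⟨a, c, Relation.ReflTransGen.refl, hX, h1, hρc, h2⟩

end AuxRestrict
/-- the wedge of `n^(c-1)` copies of `K` is collapsible iff `K` is. -/
theorem stmt4 {α : Type*} [DecidableEq α] (K : Set (Finset α)) (hfin : K.Finite)
    (hK : IsComplex K) (hconn : ComplexConnected K) (p : α)
    (hp : ({p} : Finset α) ∈ K) (c : ℕ) (hc : 0 < c) :
    Collapsible (wedge K p (K.ncard ^ (c - 1))) ↔ Collapsible K := by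
  classical
  have hKne : K.Nonempty := ⟨{p}, hp⟩
  have hKpos : 0 < K.ncard := (Set.ncard_pos hfin).mpr hKne
  set m := K.ncard ^ (c - 1) with hm
  have hmpos : 0 < m := by rw [hm]; exact pow_pos hKpos _
  constructor
  · rintro ⟨u, hcol⟩
    by_cases hu : u = (none : Option ({x : α // x ≠ p} × Fin m))
    · subst hu
      have hr := restrict_collapses hK hcol ⟨0, hmpos⟩ subset_rfl (fun _ => rfl)
      rw [wres_wedge hK, wres_none] at hr
      exact ⟨p, hr⟩
    · have hnW : ({none} : Finset (Option ({x : α // x ≠ p} × Fin m))) ∈ wedge K p m :=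
        ⟨⟨0, hmpos⟩, {p}, hp, (img_p _).symm⟩
      have hnY : ({none} : Finset (Option ({x : α // x ≠ p} × Fin m))) ∉
          ({({u} : Finset (Option ({x : α // x ≠ p} × Fin m)))} :
            Set (Finset (Option ({x : α // x ≠ p} × Fin m)))) := by
        intro h
        rw [Set.mem_singleton_iff] at h
        exact hu (Finset.singleton_injective h).symm
      obtain ⟨X1, X2, hc1, hn1, hel, hn2, hc2⟩ := split_removal hcol hnW hnY
      obtain ⟨σ, τ, hfree, hmax, hστ, hcard, hX2⟩ := hel
      have hX1W : X1 ⊆ wedge K p m := collapses_subset hc1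
      have hX2W : X2 ⊆ wedge K p m := by rw [hX2]; exact Set.diff_subset.trans hX1W
      have hσne : σ.Nonempty := wedge_nonempty_mem hK (hX1W hfree.1)
      have hnmem : ({none} : Finset (Option ({x : α // x ≠ p} × Fin m))) ∈
          ({σ, τ} : Set (Finset (Option ({x : α // x ≠ p} × Fin m)))) := by
        by_contra hcn
        exact hn2 (hX2 ▸ ⟨hn1, hcn⟩)
      have hτnone : τ ≠ {none} := by
        intro h
        have h1 : 0 < σ.card := Finset.card_pos.mpr hσne
        rw [h, Finset.card_singleton] at hcard
        omega
      have hσnone : σ = {none} := by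
        rcases hnmem with h | h
        · exact h.symm
        · exact absurd h.symm hτnone
      obtain ⟨i0, τb, hτbK, hτeq⟩ := hX1W hmax.1
      replace hτeq : τ = τb.image (wf p m i0) := hτeq
      have hstep : ElemCollapse (wres p m i0 X1) (wres p m i0 X2) := by
        rw [hX2]
        exact etrans hK hX1W hfree hmax hστ hcard hτeq
      have hpart1 : Collapses (wres p m i0 (wedge K p m)) (wres p m i0 X1) :=
        restrict_collapses hK hc1 i0 subset_rfl (fun _ => hn1)
      have hpart3 : Collapses (wres p m i0 X2)
          (wres p m i0 {({u} : Finset (Option ({x : α // x ≠ p} × Fin m)))}) :=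
        restrict_collapses hK hc2 i0 hX2W (fun h => absurd h hn2)
      have htot : Collapses K
          (wres p m i0 {({u} : Finset (Option ({x : α // x ≠ p} × Fin m)))}) := by
        rw [← wres_wedge hK p m i0]
        exact hpart1.trans ((Relation.ReflTransGen.single hstep).trans hpart3)
      rcases u with _ | ⟨y, j⟩
      · exact absurd rfl hu
      · by_cases hj : j = i0
        · subst hj
          have himgy : ({y.val} : Finset α).image (wf p m j) = {some (y, j)} := by
            rw [Finset.image_singleton]
            unfold wf
            rw [dif_neg y.prop]
          have hwr : wres p m j {({some (y, j)} :
              Finset (Option ({x : α // x ≠ p} × Fin m)))} = {({y.val} : Finset α)} := by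
            ext σb
            simp only [wres, Set.mem_setOf_eq, Set.mem_singleton_iff]
            constructor
            · intro h
              exact Finset.image_injective (wf_inj p m j) (h.trans himgy.symm)
            · rintro rfl
              exact himgy
          rw [hwr] at htot
          exact ⟨y.val, htot⟩
        · exfalso
          have hempty : wres p m i0 {({some (y, j)} :
              Finset (Option ({x : α // x ≠ p} × Fin m)))} = (∅ : Set (Finset α)) := by
            ext σb
            simp only [wres, Set.mem_setOf_eq, Set.mem_singleton_iff,
              Set.mem_empty_iff_false, iff_false]
            intro h
            have hσbne : σb.Nonempty := by
              rcases Finset.eq_empty_or_nonempty σb with rfl | hne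
              · rw [Finset.image_empty] at h
                exact absurd h.symm (Finset.singleton_ne_empty _)
              · exact hne
            obtain ⟨x, hx⟩ := hσbne
            have hmemi : wf p m i0 x ∈ σb.image (wf p m i0) := Finset.mem_image_of_mem _ hx
            rw [h, Finset.mem_singleton] at hmemi
            rcases wf_elem (p := p) (m := m) (i := i0) (x := x) with h' | ⟨y', h'⟩
            · rw [h'] at hmemi; exact nomatch hmemi
            · rw [h'] at hmemi
              simp only [Option.some_inj, Prod.mk.injEq] at hmemi
              exact hj hmemi.2.symm
          rw [hempty] at htot
          exact Set.not_nonempty_empty (collapses_nonempty htot hfin hK hKne)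
  · rintro ⟨q, hq⟩
    have hKp : Collapses K {({p} : Finset α)} :=
      collapses_to_vertex K.ncard K rfl hfin hK q p hq hp
    set C : Fin m → Set (Finset (Option ({x : α // x ≠ p} × Fin m))) :=
      fun i => (fun s : Finset α => s.image (wf p m i)) '' K with hC
    have hcopy : ∀ i : Fin m, Collapses (C i)
        {({none} : Finset (Option ({x : α // x ≠ p} × Fin m)))} := by
      intro i
      have := map_collapses (wf_inj p m i) hKp
      rwa [Set.image_singleton, img_p] at this
    have hmemC : ∀ (i : Fin m) σ, σ ∈ C i → σ ≠ {none} →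
        ∃ y : {x : α // x ≠ p}, some (y, i) ∈ σ := by
      intro i σ hσ hne
      obtain ⟨σb, hσbK, rfl⟩ := hσ
      obtain ⟨y, hy⟩ := img_ne_none (hK.1 σb hσbK) hne
      exact ⟨y, hy⟩
    set U : ℕ → Set (Finset (Option ({x : α // x ≠ p} × Fin m))) :=
      fun k => insert {none} (⋃ i : Fin m, ⋃ (_ : (i : ℕ) < k), C i) with hU
    have hnU : ∀ k, ({none} : Finset (Option ({x : α // x ≠ p} × Fin m))) ∈ U k :=
      fun k => Set.mem_insert _ _
    have hUcol : ∀ k, k ≤ m →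
        Collapses (U k) {({none} : Finset (Option ({x : α // x ≠ p} × Fin m)))} := by
      intro k
      induction k with
      | zero =>
        intro _
        have hU0 : U 0 = {({none} : Finset (Option ({x : α // x ≠ p} × Fin m)))} := by
          simp [hU]
        rw [hU0]
        exact Relation.ReflTransGen.refl
      | succ k ihk =>
        intro hk1
        have hk : k ≤ m := Nat.le_of_succ_le hk1
        have hklt : k < m := hk1
        have hsplit : U (k + 1) = C ⟨k, hklt⟩ ∪ U k := by
          ext ρ
          simp only [hU, Set.mem_insert_iff, Set.mem_iUnion, Set.mem_union]
          constructor
          · rintro (rfl | ⟨j, hjk, hρ⟩)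
            · exact Or.inr (Or.inl rfl)
            · rcases Nat.lt_succ_iff_lt_or_eq.mp hjk with hlt | heq
              · exact Or.inr (Or.inr ⟨j, hlt, hρ⟩)
              · have : j = ⟨k, hklt⟩ := Fin.ext heq
                subst this
                exact Or.inl hρ
          · rintro (hρ | (rfl | ⟨j, hjk, hρ⟩))
            · exact Or.inr ⟨⟨k, hklt⟩, Nat.lt_succ_self k, hρ⟩
            · exact Or.inl rfl
            · exact Or.inr ⟨j, Nat.lt_succ_of_lt hjk, hρ⟩
        have hside : ∀ σ ∈ C ⟨k, hklt⟩,
            σ ∉ ({({none} : Finset (Option ({x : α // x ≠ p} × Fin m)))} :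
              Set (Finset (Option ({x : α // x ≠ p} × Fin m)))) →
            ∀ a ∈ U k, ¬ σ ⊆ a := by
          intro σ hσ hσn a ha hsub
          have hσn' : σ ≠ {none} := fun h => hσn (by rw [h]; rfl)
          obtain ⟨y, hy⟩ := hmemC _ σ hσ hσn'
          rcases ha with rfl | ha
          · have := hsub hy
            rw [Finset.mem_singleton] at this
            exact nomatch this
          · rw [Set.mem_iUnion] at ha
            obtain ⟨j, ha⟩ := ha
            rw [Set.mem_iUnion] at ha
            obtain ⟨hjk, ha⟩ := ha
            obtain ⟨ab, habK, rfl⟩ := ha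
            have hmem := hsub hy
            rcases img_elem hmem with h' | ⟨y', h'⟩
            · exact nomatch h'
            · simp only [Option.some_inj, Prod.mk.injEq] at h'
              have : (⟨k, hklt⟩ : Fin m) = j := h'.2
              rw [← this] at hjk
              simp at hjk
        have hglue := glue (hcopy ⟨k, hklt⟩) hside
        have habs : ({({none} : Finset (Option ({x : α // x ≠ p} × Fin m)))} :
            Set (Finset (Option ({x : α // x ≠ p} × Fin m)))) ∪ U k = U k :=
          Set.union_eq_self_of_subset_left (Set.singleton_subset_iff.mpr (hnU k))
        rw [habs] at hglue
        rw [hsplit]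
        exact hglue.trans (ihk hk)
    have hWU : wedge K p m = U m := by
      ext ρ
      simp only [hU, wedge_eq, Set.mem_setOf_eq, Set.mem_insert_iff, Set.mem_iUnion]
      constructor
      · rintro ⟨i, σ, hσ, rfl⟩
        exact Or.inr ⟨i, i.2, ⟨σ, hσ, rfl⟩⟩
      · rintro (rfl | ⟨j, _, σ, hσ, rfl⟩)
        · exact ⟨⟨0, hmpos⟩, {p}, hp, (img_p _).symm⟩
        · exact ⟨j, σ, hσ, rfl⟩
    exact ⟨none, by rw [hWU]; exact hUcol m le_rfl⟩

end MorseApprox
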